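/- arXiv:1503.09014 — 5 statements merged into one kernel-verified Lean document; each statement's English description precedes it below -/
import Mathlib

section
/- Let X ⊆ ℝⁿ be a nonempty closed convex bounded set. Then the closure of C_X equals C_X ∪ {0}. -/
/-- For a nonempty closed convex bounded `X ⊆ ℝⁿ`, the closure of the characteristic cone
`C_X` equals `C_X ∪ {0}`. -/
theorem closure_characteristic_cone_of_bounded (n : ℕ) (X : Set (Fin n → ℝ))
    (hne : X.Nonempty) (hXc : IsClosed X) (hX : Convex ℝ X)
    (hXb : Bornology.IsBounded X) :
    closure {z : (Fin n → ℝ) × ℝ | ∃ x ∈ X, ∃ t : ℝ, 0 < t ∧ z = t • (x, (1 : ℝ))} =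
      {z : (Fin n → ℝ) × ℝ | ∃ x ∈ X, ∃ t : ℝ, 0 < t ∧ z = t • (x, (1 : ℝ))} ∪
        {(0 : (Fin n → ℝ) × ℝ)} := by
  set C : Set ((Fin n → ℝ) × ℝ) :=
    {z : (Fin n → ℝ) × ℝ | ∃ x ∈ X, ∃ t : ℝ, 0 < t ∧ z = t • (x, (1 : ℝ))} with hC
  obtain ⟨M, hM⟩ := hXb.exists_norm_le
  apply subset_antisymm
  · intro z hz
    rw [mem_closure_iff_seq_limit] at hz
    obtain ⟨u, hu, hlim⟩ := hz
    choose x hxX t ht hut using hu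
    have ht2 : ∀ k, (u k).2 = t k := by
      intro k; rw [hut k]; simp
    have ht1 : ∀ k, (u k).1 = t k • x k := by
      intro k; rw [hut k]; rfl
    have hlim2 : Filter.Tendsto t Filter.atTop (nhds z.2) := by
      have := (continuous_snd.tendsto z).comp hlim
      simpa [Function.comp_def, ht2] using this
    have hz2 : 0 ≤ z.2 :=
      le_of_tendsto_of_tendsto' tendsto_const_nhds hlim2 (fun k => (ht k).le)
    have hlim1 : Filter.Tendsto (fun k => (u k).1) Filter.atTop (nhds z.1) :=
      (continuous_fst.tendsto z).comp hlim
    rcases eq_or_lt_of_le hz2 with h0 | hpos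
    · -- z.2 = 0, show z = 0
      right
      have hM0 : 0 ≤ M := le_trans (norm_nonneg _) (hM _ hne.some_mem)
      have hnorm : Filter.Tendsto (fun k => ‖(u k).1‖) Filter.atTop (nhds 0) := by
        apply squeeze_zero (fun k => norm_nonneg _) (g := fun k => t k * M)
        · intro k
          rw [ht1 k, norm_smul, Real.norm_eq_abs, abs_of_pos (ht k)]
          exact mul_le_mul_of_nonneg_left (hM _ (hxX k)) (ht k).le
        · have : Filter.Tendsto (fun k => t k * M) Filter.atTop (nhds (z.2 * M)) :=
            hlim2.mul_const M
          simpa [← h0] using this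
      have h1 : z.1 = 0 := by
        have := tendsto_zero_iff_norm_tendsto_zero.mpr hnorm
        exact tendsto_nhds_unique hlim1 this
      have : z = (0, 0) := Prod.ext h1 h0.symm
      simp [this, Prod.ext_iff]
    · -- z.2 > 0
      left
      refine ⟨z.2⁻¹ • z.1, ?_, z.2, hpos, ?_⟩
      · -- limit of x k
        have hxlim : Filter.Tendsto x Filter.atTop (nhds (z.2⁻¹ • z.1)) := by
          have hinv : Filter.Tendsto (fun k => (t k)⁻¹) Filter.atTop (nhds z.2⁻¹) :=
            hlim2.inv₀ hpos.ne'
          have := hinv.smul hlim1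
          have hx : ∀ k, (t k)⁻¹ • (u k).1 = x k := by
            intro k; rw [ht1 k, inv_smul_smul₀ (ht k).ne']
          simpa [hx] using this
        exact hXc.mem_of_tendsto hxlim (Filter.Eventually.of_forall hxX)
      · apply Prod.ext
        · simp [smul_inv_smul₀ hpos.ne']
        · simp
  · rintro z (hz | hz)
    · exact subset_closure hz
    · simp only [Set.mem_singleton_iff] at hz
      subst hz
      rw [mem_closure_iff_seq_limit]
      obtain ⟨x, hx⟩ := hne
      refine ⟨fun k => (1 / (k + 1) : ℝ) • (x, 1), fun k => ⟨x, hx, 1 / (k + 1), by positivity, rfl⟩, ?_⟩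
      have : Filter.Tendsto (fun k : ℕ => (1 / (k + 1) : ℝ)) Filter.atTop (nhds 0) :=
        tendsto_one_div_add_atTop_nhds_zero_nat
      simpa using this.smul_const ((x, 1) : (Fin n → ℝ) × ℝ)
end

section
/- Let X ⊆ ℝⁿ be a nonempty closed convex set, and let R be the set of recession directions of X together with 0 (the recession cone). Then the closure of C_X equals C_X ∪ { (d, 0) : d ∈ R }. -/
/-- For a nonempty closed convex `X ⊆ ℝⁿ` with recession cone
`R = { d : x + θ • d ∈ X for all x ∈ X, θ ≥ 0 }` (which contains `0`), the closure of
the characteristic cone `C_X` equals `C_X ∪ { (d, 0) : d ∈ R }`. -/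
theorem closure_characteristic_cone (n : ℕ) (X : Set (Fin n → ℝ))
    (hne : X.Nonempty) (hXc : IsClosed X) (hX : Convex ℝ X) :
    closure {z : (Fin n → ℝ) × ℝ | ∃ x ∈ X, ∃ t : ℝ, 0 < t ∧ z = t • (x, (1 : ℝ))} =
      {z : (Fin n → ℝ) × ℝ | ∃ x ∈ X, ∃ t : ℝ, 0 < t ∧ z = t • (x, (1 : ℝ))} ∪
        {z : (Fin n → ℝ) × ℝ |
          ∃ d : Fin n → ℝ, (∀ x ∈ X, ∀ θ : ℝ, 0 ≤ θ → x + θ • d ∈ X) ∧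
            z = ((d, (0 : ℝ)) : (Fin n → ℝ) × ℝ)} := by
  set C := {z : (Fin n → ℝ) × ℝ | ∃ x ∈ X, ∃ t : ℝ, 0 < t ∧ z = t • (x, (1 : ℝ))} with hC
  apply Set.Subset.antisymm
  · intro z hz
    rw [mem_closure_iff_seq_limit] at hz
    obtain ⟨u, hu, hlim⟩ := hz
    choose x hx t ht hueq using hu
    have h1 : ∀ k, (u k).1 = t k • x k := fun k => by rw [hueq k]; simp [Prod.smul_def]
    have h2 : ∀ k, (u k).2 = t k := fun k => by rw [hueq k]; simp [Prod.smul_def]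
    have hlim1 : Filter.Tendsto (fun k => t k • x k) Filter.atTop (nhds z.1) := by
      have h := (continuous_fst.tendsto z).comp hlim
      exact (Filter.Tendsto.congr (fun k => h1 k) h)
    have hlim2 : Filter.Tendsto t Filter.atTop (nhds z.2) := by
      have h := (continuous_snd.tendsto z).comp hlim
      exact (Filter.Tendsto.congr (fun k => h2 k) h)
    have hz2 : 0 ≤ z.2 := ge_of_tendsto' hlim2 (fun k => (ht k).le)
    rcases hz2.lt_or_eq with hpos | hzero
    · left
      have hzne : z.2 ≠ 0 := ne_of_gt hpos
      have hxlim : Filter.Tendsto x Filter.atTop (nhds (z.2⁻¹ • z.1)) := by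
        have : Filter.Tendsto (fun k => (t k)⁻¹ • (t k • x k)) Filter.atTop
            (nhds (z.2⁻¹ • z.1)) := (hlim2.inv₀ hzne).smul hlim1
        refine this.congr (fun k => ?_)
        rw [smul_smul, inv_mul_cancel₀ (ne_of_gt (ht k)), one_smul]
      have hmem : z.2⁻¹ • z.1 ∈ X := hXc.mem_of_tendsto hxlim
        (Filter.Eventually.of_forall hx)
      exact ⟨z.2⁻¹ • z.1, hmem, z.2, hpos, by
        rw [Prod.ext_iff]
        constructor
        · simp [smul_smul, mul_inv_cancel₀ hzne]
        · simp⟩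
    · right
      refine ⟨z.1, ?_, by rw [Prod.ext_iff]; exact ⟨rfl, hzero.symm⟩⟩
      intro a ha θ hθ
      rcases hθ.lt_or_eq with hθpos | hθ0
      · have hev : ∀ᶠ k in Filter.atTop, θ * t k ≤ 1 := by
          have : Filter.Tendsto (fun k => θ * t k) Filter.atTop (nhds 0) := by
            simpa [← hzero] using hlim2.const_mul θ
          exact this.eventually (eventually_le_nhds (by norm_num))
        have hlim' : Filter.Tendsto (fun k => (1 - θ * t k) • a + θ • (t k • x k))
            Filter.atTop (nhds (a + θ • z.1)) := by
          have h1' : Filter.Tendsto (fun k => (1 - θ * t k) • a) Filter.atTop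
              (nhds ((1 : ℝ) • a)) := by
            have : Filter.Tendsto (fun k => 1 - θ * t k) Filter.atTop (nhds 1) := by
              have : Filter.Tendsto (fun k => θ * t k) Filter.atTop (nhds 0) := by
                simpa [← hzero] using hlim2.const_mul θ
              simpa using (tendsto_const_nhds (x := (1:ℝ))).sub this
            exact this.smul tendsto_const_nhds
          have h2' : Filter.Tendsto (fun k => θ • (t k • x k)) Filter.atTop
              (nhds (θ • z.1)) := hlim1.const_smul θ
          simpa using h1'.add h2'
        refine hXc.mem_of_tendsto hlim' ?_
        filter_upwards [hev] with k hk
        have hmem : (1 - θ * t k) • a + (θ * t k) • x k ∈ X :=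
          hX ha (hx k) (by nlinarith [ht k]) (mul_nonneg hθpos.le (ht k).le) (by ring)
        simpa [mul_smul] using hmem
      · simp [← hθ0, ha]
  · rintro z (hzC | ⟨d, hd, rfl⟩)
    · exact subset_closure hzC
    · obtain ⟨x0, hx0⟩ := hne
      have hmem : ∀ k : ℕ, ((1 : ℝ)/(k+1)) • ((x0 + ((k:ℝ)+1) • d : Fin n → ℝ), (1:ℝ)) ∈ C := by
        intro k
        exact ⟨x0 + ((k:ℝ)+1) • d, hd x0 hx0 ((k:ℝ)+1) (by positivity), 1/(k+1), by positivity, rfl⟩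
      have ht0 : Filter.Tendsto (fun k : ℕ => (1:ℝ)/(k+1)) Filter.atTop (nhds 0) :=
        tendsto_one_div_add_atTop_nhds_zero_nat
      have htend : Filter.Tendsto
          (fun k : ℕ => ((1 : ℝ)/(k+1)) • ((x0 + ((k:ℝ)+1) • d : Fin n → ℝ), (1:ℝ)))
          Filter.atTop (nhds ((d, (0:ℝ)))) := by
        rw [nhds_prod_eq]
        refine Filter.Tendsto.prodMk ?_ ?_
        · have : Filter.Tendsto (fun k : ℕ => ((1:ℝ)/(k+1)) • x0 + d) Filter.atTop
              (nhds ((0:ℝ) • x0 + d)) := (ht0.smul tendsto_const_nhds).add tendsto_const_nhds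
          refine (this.congr (fun k => ?_)).mono_right (by simp)
          show ((1:ℝ)/(k+1)) • x0 + d = ((1:ℝ)/(k+1)) • (x0 + ((k:ℝ)+1) • d)
          rw [smul_add, smul_smul]
          congr 1
          rw [div_mul_eq_mul_div, one_mul, div_self (by positivity), one_smul]
        · simpa using ht0.mono_right (le_refl _)
      exact mem_closure_of_tendsto htend (Filter.Eventually.of_forall hmem)
end

section
/- Let C ⊆ ℝ₊^{n+1} be a convex cone and let (z¹*, z²*) be an optimal solution of: maximize Σⱼ z²ⱼ subject to z¹ + z² ∈ C, z¹ ≥ 0, z² ≤ 1 (componentwise). Then z²* ≥ 0, every positive component of z²* equals 1, and z¹* + z²* is a maximal element of C (it maximizes the number of positive components over C). -/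
/-- Let `C ⊆ ℝ₊^{n+1}` be a convex cone and `(z¹*, z²*)` an optimal solution of
`max Σⱼ z²ⱼ  s.t.  z¹ + z² ∈ C, z¹ ≥ 0, z² ≤ 1`. Then `z²* ≥ 0`, every positive component
of `z²*` equals `1`, and `z¹* + z²*` is a maximal element of `C`. -/
theorem maximal_element_of_cone_via_CP (n : ℕ) (C : Set (Fin (n + 1) → ℝ))
    (hCpos : ∀ z ∈ C, ∀ j, 0 ≤ z j)
    (hCsmul : ∀ z ∈ C, ∀ a : ℝ, 0 ≤ a → a • z ∈ C)
    (hCadd : ∀ z ∈ C, ∀ w ∈ C, z + w ∈ C)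
    (z1 z2 : Fin (n + 1) → ℝ)
    (hfeas : z1 + z2 ∈ C ∧ (∀ j, 0 ≤ z1 j) ∧ (∀ j, z2 j ≤ 1))
    (hopt : ∀ w1 w2 : Fin (n + 1) → ℝ,
      (w1 + w2 ∈ C ∧ (∀ j, 0 ≤ w1 j) ∧ (∀ j, w2 j ≤ 1)) →
        ∑ j, w2 j ≤ ∑ j, z2 j) :
    (∀ j, 0 ≤ z2 j) ∧ (∀ j, 0 < z2 j → z2 j = 1) ∧
      (z1 + z2 ∈ C ∧ ∀ z ∈ C,
        (Finset.univ.filter fun j => 0 < z j).card ≤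
          (Finset.univ.filter fun j => 0 < (z1 + z2) j).card) := by
  obtain ⟨hx, hz1, hz2⟩ := hfeas
  have hxpos : ∀ j, 0 ≤ (z1 + z2) j := hCpos _ hx
  -- Part 1
  have h1 : ∀ j, 0 ≤ z2 j := by
    intro j
    by_contra h
    push_neg at h
    have hfeas' : (Function.update z1 j (z1 j + z2 j) + Function.update z2 j 0 ∈ C ∧
        (∀ k, 0 ≤ Function.update z1 j (z1 j + z2 j) k) ∧
        (∀ k, Function.update z2 j 0 k ≤ 1)) := by
      refine ⟨?_, ?_, ?_⟩
      · have : Function.update z1 j (z1 j + z2 j) + Function.update z2 j 0 = z1 + z2 := by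
          funext k
          by_cases hk : k = j <;> simp [Function.update, hk]
        rw [this]; exact hx
      · intro k
        by_cases hk : k = j
        · subst hk; simpa using hxpos k
        · simpa [Function.update, hk] using hz1 k
      · intro k
        by_cases hk : k = j
        · subst hk; simp
        · simpa [Function.update, hk] using hz2 k
    have hle := hopt _ _ hfeas'
    rw [Finset.sum_update_of_mem (Finset.mem_univ j),
      Finset.sum_eq_sum_sdiff_singleton_add (Finset.mem_univ j) z2] at hle
    linarith
  -- Part 2
  have h2 : ∀ j, 0 < z2 j → z2 j = 1 := by
    intro j hj
    by_contra hne
    have hlt : z2 j < 1 := lt_of_le_of_ne (hz2 j) hne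
    have hxj : 0 < (z1 + z2) j := by
      have := hz1 j
      simp only [Pi.add_apply]; linarith
    set a : ℝ := max 1 (1 / (z1 + z2) j) with ha
    have ha1 : 1 ≤ a := le_max_left _ _
    have haxj : 1 ≤ a * (z1 + z2) j := by
      calc 1 = (1 / (z1 + z2) j) * (z1 + z2) j := (one_div_mul_cancel (ne_of_gt hxj)).symm
      _ ≤ a * (z1 + z2) j := mul_le_mul_of_nonneg_right (le_max_right _ _) (le_of_lt hxj)
    have hfeas' : ((a • (z1 + z2) - Function.update z2 j 1) + Function.update z2 j 1 ∈ C ∧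
        (∀ k, 0 ≤ (a • (z1 + z2) - Function.update z2 j 1) k) ∧
        (∀ k, Function.update z2 j 1 k ≤ 1)) := by
      refine ⟨?_, ?_, ?_⟩
      · rw [sub_add_cancel]
        exact hCsmul _ hx a (by linarith)
      · intro k
        by_cases hk : k = j
        · subst hk
          simp only [Pi.sub_apply, Pi.smul_apply, smul_eq_mul, Function.update_self]
          linarith
        · simp only [Pi.sub_apply, Pi.smul_apply, smul_eq_mul, Function.update_of_ne hk]
          have h1k := hz1 k
          have hxk := hxpos k
          have hxk' : (z1 + z2) k = z1 k + z2 k := rfl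
          nlinarith [mul_nonneg (sub_nonneg.2 ha1) hxk]
      · intro k
        by_cases hk : k = j
        · subst hk; simp
        · simpa [Function.update, hk] using hz2 k
    have hle := hopt _ _ hfeas'
    rw [Finset.sum_update_of_mem (Finset.mem_univ j),
      Finset.sum_eq_sum_sdiff_singleton_add (Finset.mem_univ j) z2] at hle
    linarith
  refine ⟨h1, h2, hx, ?_⟩
  -- Part 3
  intro z hz
  apply Finset.card_le_card
  intro j hj
  simp only [Finset.mem_filter, Finset.mem_univ, true_and] at hj ⊢
  by_contra hxj
  push_neg at hxj
  have hxj0 : (z1 + z2) j = 0 := le_antisymm hxj (hxpos j)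
  have hz2j : z2 j = 0 := by
    have : z2 j ≤ (z1 + z2) j := by simp only [Pi.add_apply]; linarith [hz1 j]
    have := h1 j
    linarith [hxj0 ▸ ‹z2 j ≤ (z1 + z2) j›]
  set y := z1 + z2 + z with hy
  have hyC : y ∈ C := hCadd _ hx _ hz
  have hypos : ∀ k, 0 ≤ y k := hCpos _ hyC
  have hfeas' : ((y - fun k => min (y k) 1) + (fun k => min (y k) 1) ∈ C ∧
      (∀ k, 0 ≤ (y - fun k => min (y k) 1) k) ∧
      (∀ k, min (y k) 1 ≤ 1)) := by
    refine ⟨?_, ?_, fun k => min_le_right _ _⟩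
    · rw [sub_add_cancel]; exact hyC
    · intro k
      simp only [Pi.sub_apply]
      have := min_le_left (y k) 1
      linarith
  have hle := hopt _ _ hfeas'
  have hlt : ∑ k, z2 k < ∑ k, min (y k) 1 := by
    apply Finset.sum_lt_sum
    · intro k _
      have hzk := hCpos _ hz k
      have : z2 k ≤ y k := by
        simp only [hy, Pi.add_apply]
        linarith [hz1 k]
      exact le_min this (hz2 k)
    · refine ⟨j, Finset.mem_univ j, ?_⟩
      have hyj : y j = z j := by
        simp only [hy, Pi.add_apply]
        have : z1 j + z2 j = 0 := hxj0
        linarith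
      rw [hz2j, hyj]
      exact lt_min hj one_pos
  linarith
end

section
/- Let P = { x ∈ ℝⁿ : A x = b, x ≥ 0 } be a nonempty polyhedron. Then the relative interior of P equals the set of maximal elements of P, i.e., ri(P) = { x ∈ P : ‖x‖₀ ≥ ‖y‖₀ for all y ∈ P }. -/
open Finset

private lemma supp_subset_of_max {m n : ℕ} {A : Matrix (Fin m) (Fin n) ℝ} {b : Fin m → ℝ}
    {P : Set (Fin n → ℝ)} (hP : P = {x | A.mulVec x = b ∧ ∀ j, 0 ≤ x j})
    {x : Fin n → ℝ} (hx : x ∈ P)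
    (hmax : ∀ y ∈ P, (Finset.univ.filter fun j => 0 < y j).card ≤
      (Finset.univ.filter fun j => 0 < x j).card)
    {y : Fin n → ℝ} (hy : y ∈ P) :
    (Finset.univ.filter fun j => 0 < y j) ⊆ (Finset.univ.filter fun j => 0 < x j) := by
  rw [hP] at hx hy
  obtain ⟨hAx, hx0⟩ := hx
  obtain ⟨hAy, hy0⟩ := hy
  set z : Fin n → ℝ := (2⁻¹ : ℝ) • (x + y) with hzdef
  have hzP : z ∈ P := by
    rw [hP]
    constructor
    · rw [hzdef, Matrix.mulVec_smul, Matrix.mulVec_add, hAx, hAy]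
      ext i
      simp
      ring
    · intro j
      have := hx0 j
      have := hy0 j
      simp [hzdef]
      positivity
  have hsupp : (Finset.univ.filter fun j => 0 < z j)
      = (Finset.univ.filter fun j => 0 < x j) ∪ (Finset.univ.filter fun j => 0 < y j) := by
    ext j
    have hxj := hx0 j
    have hyj := hy0 j
    simp only [Finset.mem_filter, Finset.mem_union, Finset.mem_univ, true_and, hzdef,
      Pi.smul_apply, Pi.add_apply, smul_eq_mul]
    constructor
    · intro h
      by_contra hc
      push_neg at hc
      have h1 : x j = 0 := le_antisymm hc.1 hxj
      have h2 : y j = 0 := le_antisymm hc.2 hyj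
      rw [h1, h2] at h
      norm_num at h
    · intro h
      rcases h with h | h <;> nlinarith
  have hsub : (Finset.univ.filter fun j => 0 < x j) ⊆ (Finset.univ.filter fun j => 0 < z j) := by
    rw [hsupp]; exact Finset.subset_union_left
  have heq : (Finset.univ.filter fun j => 0 < z j) = (Finset.univ.filter fun j => 0 < x j) :=
    (Finset.eq_of_subset_of_card_le hsub (hmax z hzP)).symm
  calc (Finset.univ.filter fun j => 0 < y j)
      ⊆ (Finset.univ.filter fun j => 0 < z j) := by rw [hsupp]; exact Finset.subset_union_right
    _ = _ := heq

/-- For a nonempty polyhedron `P = { x : A x = b, x ≥ 0 }`, the relative interior of `P`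
equals the set of maximal elements of `P`. -/
theorem relative_interior_eq_maximal_elements (m n : ℕ)
    (A : Matrix (Fin m) (Fin n) ℝ) (b : Fin m → ℝ)
    (P : Set (Fin n → ℝ)) (hP : P = {x | A.mulVec x = b ∧ ∀ j, 0 ≤ x j})
    (hne : P.Nonempty) :
    intrinsicInterior ℝ P =
      {x | x ∈ P ∧ ∀ y ∈ P,
        (Finset.univ.filter fun j => 0 < y j).card ≤
          (Finset.univ.filter fun j => 0 < x j).card} := by
  ext x
  constructor
  · -- ri(P) ⊆ maximal elements
    intro hx
    have hxP : x ∈ P := intrinsicInterior_subset hx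
    refine ⟨hxP, ?_⟩
    intro u huP
    -- show supp u ⊆ supp x, then card
    refine Finset.card_le_card ?_
    intro j hj
    rw [Finset.mem_filter] at hj ⊢
    refine ⟨Finset.mem_univ _, ?_⟩
    by_contra hc
    have hx0 : x j = 0 := by
      have : 0 ≤ x j := (hP ▸ hxP).2 j
      linarith [not_lt.mp hc]
    -- use openness along the line through u and x
    rw [mem_intrinsicInterior] at hx
    obtain ⟨y, hyint, hyx⟩ := hx
    have hxA : x ∈ affineSpan ℝ P := subset_affineSpan ℝ P hxP
    have huA : u ∈ affineSpan ℝ P := subset_affineSpan ℝ P huP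
    set g : ℝ → affineSpan ℝ P := fun t =>
      ⟨AffineMap.lineMap x u t, AffineMap.lineMap_mem t hxA huA⟩ with hgdef
    have hgc : Continuous g := by
      refine Continuous.subtype_mk ?_ _
      exact AffineMap.lineMap_continuous
    have hg0 : g 0 = y := by
      apply Subtype.ext
      simp [hgdef, hyx]
    have hopen : IsOpen (g ⁻¹' interior ((↑) ⁻¹' P : Set (affineSpan ℝ P))) :=
      isOpen_interior.preimage hgc
    have h0mem : (0 : ℝ) ∈ g ⁻¹' interior ((↑) ⁻¹' P) := by
      simp only [Set.mem_preimage, hg0]; exact hyint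
    obtain ⟨ε, hε, hball⟩ := Metric.isOpen_iff.mp hopen 0 h0mem
    have htmem : (-(ε/2)) ∈ Metric.ball (0:ℝ) ε := by
      simp only [Metric.mem_ball, dist_zero_right, Real.norm_eq_abs, abs_neg,
        abs_of_nonneg (by positivity : (0:ℝ) ≤ ε/2)]
      linarith
    have : g (-(ε/2)) ∈ interior ((↑) ⁻¹' P : Set (affineSpan ℝ P)) := hball htmem
    have hmem : (AffineMap.lineMap x u (-(ε/2)) : Fin n → ℝ) ∈ P := by
      have h2 := interior_subset this
      simpa [hgdef] using h2
    have hnn : 0 ≤ (AffineMap.lineMap x u (-(ε/2)) : Fin n → ℝ) j := (hP ▸ hmem).2 j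
    have hval : (AffineMap.lineMap x u (-(ε/2)) : Fin n → ℝ) j = -(ε/2) * (u j - x j) + x j := by
      simp only [AffineMap.lineMap_apply, vsub_eq_sub, vadd_eq_add, Pi.add_apply,
        Pi.smul_apply, Pi.sub_apply, smul_eq_mul]
    rw [hval, hx0] at hnn
    have huj : 0 < u j := hj.2
    nlinarith
  · -- maximal elements ⊆ ri(P)
    rintro ⟨hxP, hmax⟩
    have hsub : ∀ y ∈ P, (Finset.univ.filter fun j => 0 < y j)
        ⊆ (Finset.univ.filter fun j => 0 < x j) := fun y hy =>
      supp_subset_of_max hP hxP hmax hy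
    set S := (Finset.univ.filter fun j => 0 < x j) with hSdef
    -- affine subspace W containing P
    set W : AffineSubspace ℝ (Fin n → ℝ) :=
      { carrier := {z | A.mulVec z = b ∧ ∀ j ∉ S, z j = 0}
        smul_vsub_vadd_mem' := by
          rintro c p₁ p₂ p₃ ⟨h1, h1'⟩ ⟨h2, h2'⟩ ⟨h3, h3'⟩
          constructor
          · show A.mulVec (c • (p₁ - p₂) + p₃) = b
            rw [Matrix.mulVec_add, Matrix.mulVec_smul, Matrix.mulVec_sub, h1, h2, h3]
            simp
          · intro j hj
            show (c • (p₁ - p₂) + p₃) j = 0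
            simp [h1' j hj, h2' j hj, h3' j hj] } with hWdef
    have hPW : P ⊆ (W : Set (Fin n → ℝ)) := by
      intro y hy
      refine ⟨(hP ▸ hy).1, ?_⟩
      intro j hj
      have : j ∉ (Finset.univ.filter fun j => 0 < y j) := fun h => hj (hsub y hy h)
      have : ¬ 0 < y j := by simpa using this
      exact le_antisymm (not_lt.mp this) ((hP ▸ hy).2 j)
    have hspanW : (affineSpan ℝ P : Set (Fin n → ℝ)) ⊆ (W : Set (Fin n → ℝ)) :=
      (affineSpan_le.mpr hPW)
    rw [mem_intrinsicInterior]
    refine ⟨⟨x, subset_affineSpan ℝ P hxP⟩, ?_, rfl⟩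
    rw [mem_interior_iff_mem_nhds, Metric.mem_nhds_iff]
    set ε := (insert (1:ℝ) (S.image x)).min' (Finset.insert_nonempty _ _) with hεdef
    have hε : 0 < ε := by
      rw [hεdef]
      rw [Finset.lt_min'_iff]
      intro a ha
      rcases Finset.mem_insert.mp ha with h | h
      · rw [h]; norm_num
      · obtain ⟨j, hj, rfl⟩ := Finset.mem_image.mp h
        exact (Finset.mem_filter.mp hj).2
    refine ⟨ε, hε, ?_⟩
    intro z hz
    have hzW : (z : Fin n → ℝ) ∈ (W : Set (Fin n → ℝ)) := hspanW z.2
    have hdist : dist (z : Fin n → ℝ) x < ε := by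
      rw [Metric.mem_ball] at hz
      exact hz
    show (z : Fin n → ℝ) ∈ P
    have hPmem : ∀ w : Fin n → ℝ, w ∈ P ↔ (A.mulVec w = b ∧ ∀ j, 0 ≤ w j) := fun w => by
      rw [hP]; rfl
    rw [hPmem]
    refine ⟨hzW.1, ?_⟩
    intro j
    by_cases hj : j ∈ S
    · have hxj : 0 < x j := (Finset.mem_filter.mp hj).2
      have hεx : ε ≤ x j :=
        Finset.min'_le _ _ (Finset.mem_insert_of_mem (Finset.mem_image_of_mem x hj))
      have hd : dist ((z : Fin n → ℝ) j) (x j) ≤ dist (z : Fin n → ℝ) x :=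
        dist_le_pi_dist _ _ j
      rw [Real.dist_eq] at hd
      have : |(z : Fin n → ℝ) j - x j| < x j := lt_of_le_of_lt hd (lt_of_lt_of_le hdist hεx)
      have := abs_lt.mp this
      linarith
    · rw [hzW.2 j hj]
end

section
/- Strict complementarity characterizes relative interiors of optimal faces: for the primal problem max{cᵀx : Ax + u = b, x,u ≥ 0} and dual min{bᵀy : Aᵀy − v = c, y,v ≥ 0}, a pair of optimal solutions ((x*,u*),(y*,v*)) satisfies x* + v* > 0 and y* + u* > 0 (componentwise) if and only if (x*,u*) lies in the relative interior of the primal optimal face and (y*,v*) lies in the relative interior of the dual optimal face. -/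
/-!
If `(x, u)` and `(y, v)` are optimal, the duality gap `b ⬝ᵥ y - c ⬝ᵥ x = x ⬝ᵥ v + u ⬝ᵥ y` vanishes,
so `x j * v j = 0` and `y i * u i = 0` for every pair of optimal solutions. A point of a polyhedron
`{f = r, g ≥ 0}` lies in its relative interior exactly when every inequality `g k ≥ 0` that is tight
at the point is tight on the whole polyhedron. Under strict complementarity a vanishing coordinate
of `(x*, u*)` has a positive partner in `(y*, v*)`, which forces it to vanish on the whole primal
face, and symmetrically for the dual. Conversely, the Goldman–Tucker theorem provides, for each
index, an optimal pair that is strictly complementary at that index, so the coordinates there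
cannot both vanish on the two faces. Goldman–Tucker follows from Tucker's theorem for the
skew-symmetric matrix of the self-dual homogeneous system, a consequence of Farkas' lemma: a
nonnegative solution `(x, y, t)` of that system, added to the given optimal pair and divided by
`1 + t`, is again an optimal pair.
-/

open Matrix

theorem exists_dotProduct_nonneg_of_notMem_hull {κ : Type*} [Fintype κ] (s : Finset (κ → ℝ))
    {d : κ → ℝ} (hd : d ∉ PointedCone.hull ℝ (s : Set (κ → ℝ))) :
    ∃ z, (∀ x ∈ s, 0 ≤ x ⬝ᵥ z) ∧ d ⬝ᵥ z < 0 := by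
  classical
  induction hn : s.card using Nat.strong_induction_on generalizing s d with
  | _ n ih =>
    obtain rfl | ⟨w, hws⟩ := s.eq_empty_or_nonempty
    · have hd0 : d ≠ 0 := fun h => hd (h ▸ zero_mem _)
      have hdd : 0 < d ⬝ᵥ d :=
        (Finset.sum_nonneg fun i _ => mul_self_nonneg (d i)).lt_of_ne'
          (dotProduct_self_eq_zero.not.mpr hd0)
      exact ⟨-d, by simp, by simpa [dotProduct_neg] using hdd⟩
    rw [← Finset.insert_erase hws] at hd ⊢
    set t := s.erase w
    have ht : t.card < n := hn ▸ Finset.card_erase_lt_of_mem hws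
    set C := PointedCone.hull ℝ ((insert w t : Finset _) : Set (κ → ℝ))
    have hw_mem : w ∈ C := PointedCone.subset_hull (by simp)
    have ht_sub : PointedCone.hull ℝ (t : Set (κ → ℝ)) ≤ C := Submodule.span_mono (by simp)
    obtain ⟨z, hz, hdz⟩ := ih _ ht t (fun h => hd (ht_sub h)) rfl
    by_cases hwz : 0 ≤ w ⬝ᵥ z
    · exact ⟨z, Finset.forall_mem_insert .. |>.mpr ⟨hwz, hz⟩, hdz⟩
    push Not at hwz
    -- Projecting along `w` onto `{x | x ⬝ᵥ z = 0}` keeps the generators inside the cone.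
    set π : (κ → ℝ) → κ → ℝ := fun x => x + (-(x ⬝ᵥ z / (w ⬝ᵥ z))) • w with hπ
    have hπ_mem : PointedCone.hull ℝ (t.image π : Set (κ → ℝ)) ≤ C := by
      refine Submodule.span_le.mpr ?_
      simp only [Finset.coe_image, Set.image_subset_iff]
      intro x hx
      exact add_mem (ht_sub (PointedCone.subset_hull hx)) (PointedCone.smul_mem _
        (neg_nonneg.mpr (div_nonpos_of_nonneg_of_nonpos (hz x hx) hwz.le)) hw_mem)
    have hπd : π d ∉ PointedCone.hull ℝ (t.image π : Set (κ → ℝ)) := fun h => hd <| by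
      have : d = π d + (d ⬝ᵥ z / (w ⬝ᵥ z)) • w := by simp [hπ]
      exact this ▸ add_mem (hπ_mem h)
        (PointedCone.smul_mem _ (div_pos_of_neg_of_neg hdz hwz).le hw_mem)
    obtain ⟨z', hz', hdz'⟩ := ih _ (Finset.card_image_le.trans_lt ht) (t.image π) hπd rfl
    set z'' := z' - (w ⬝ᵥ z' / (w ⬝ᵥ z)) • z
    have hπ_adj : ∀ x, π x ⬝ᵥ z' = x ⬝ᵥ z'' := fun x => by
      simp only [hπ, z'', add_dotProduct, dotProduct_sub, smul_dotProduct, dotProduct_smul,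
        smul_eq_mul]
      ring
    refine ⟨z'', Finset.forall_mem_insert .. |>.mpr ⟨?_, fun x hx => ?_⟩, hπ_adj d ▸ hdz'⟩
    · simp only [z'', dotProduct_sub, dotProduct_smul, smul_eq_mul]
      rw [div_mul_cancel₀ _ hwz.ne, sub_self]
    · exact hπ_adj x ▸ hz' _ (Finset.mem_image_of_mem π hx)

theorem Matrix.exists_vecMul_nonneg_of_forall_mulVec_ne {ι κ : Type*} [Fintype ι] [Fintype κ]
    (B : Matrix κ ι ℝ) {d : κ → ℝ} (hd : ∀ w, 0 ≤ w → B *ᵥ w ≠ d) :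
    ∃ z, 0 ≤ z ᵥ* B ∧ d ⬝ᵥ z < 0 := by
  classical
  have hcols : d ∉ PointedCone.hull ℝ (((Finset.univ.image fun j i => B i j) : Finset _) :
      Set (κ → ℝ)) := by
    intro hmem
    rw [Finset.coe_image, Finset.coe_univ, Set.image_univ,
      Submodule.mem_span_range_iff_exists_fun] at hmem
    obtain ⟨w, hw⟩ := hmem
    refine hd (fun j => w j) (fun j => (w j).2) ?_
    rw [← hw]
    ext k
    simp [mulVec, dotProduct, Finset.sum_apply, ← Nonneg.coe_smul, mul_comm]
  obtain ⟨z, hz, hdz⟩ := exists_dotProduct_nonneg_of_notMem_hull _ hcols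
  refine ⟨z, fun j => ?_, hdz⟩
  simpa [vecMul, dotProduct_comm] using hz _ (Finset.mem_image_of_mem _ (Finset.mem_univ j))

theorem Matrix.exists_nonneg_mulVec_nonneg_of_transpose_eq_neg {ι : Type*} [Fintype ι]
    [DecidableEq ι] (M : Matrix ι ι ℝ) (hM : Mᵀ = -M) (k : ι) :
    ∃ w, 0 ≤ w ∧ 0 ≤ M *ᵥ w ∧ 0 < w k + (M *ᵥ w) k := by
  by_cases hsol : ∃ v, 0 ≤ v ∧ fromCols M (-1 : Matrix ι ι ℝ) *ᵥ v = Pi.single k 1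
  · obtain ⟨v, hv, hMv⟩ := hsol
    have hMw : M *ᵥ (v ∘ Sum.inl) = Pi.single k 1 + v ∘ Sum.inr := by
      rw [← hMv, fromCols_mulVec, neg_mulVec, one_mulVec]
      abel
    have hsingle : (0 : ι → ℝ) ≤ Pi.single k 1 := Pi.single_nonneg.mpr zero_le_one
    refine ⟨v ∘ Sum.inl, fun i => hv _, hMw ▸ add_nonneg hsingle fun i => hv _, ?_⟩
    have h₁ : 0 ≤ v (Sum.inl k) := hv _
    have h₂ : 0 ≤ v (Sum.inr k) := hv _
    simp only [hMw, Pi.add_apply, Pi.single_eq_same, Function.comp_apply]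
    linarith
  · push Not at hsol
    obtain ⟨z, hz, hkz⟩ := exists_vecMul_nonneg_of_forall_mulVec_ne _ hsol
    rw [vecMul_fromCols, Sum.nonneg_elim_iff, vecMul_neg, vecMul_one, neg_nonneg] at hz
    have hMz : M *ᵥ -z = z ᵥ* M := by
      rw [mulVec_neg, ← neg_mulVec, ← hM, mulVec_transpose]
    refine ⟨-z, neg_nonneg.mpr hz.2, hMz ▸ hz.1, ?_⟩
    have h₁ : 0 ≤ (z ᵥ* M) k := hz.1 k
    simp only [single_dotProduct, one_mul] at hkz
    simp only [hMz, Pi.neg_apply]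
    linarith

section IntrinsicInterior

open AffineMap Filter Topology

theorem mem_intrinsicInterior_of_isOpen {E : Type*} [AddCommGroup E] [Module ℝ E]
    [TopologicalSpace E] {s U : Set E} {p : E} (hp : p ∈ s) (hU : IsOpen U) (hpU : p ∈ U)
    (hUs : U ∩ affineSpan ℝ s ⊆ s) : p ∈ intrinsicInterior ℝ s :=
  ⟨⟨p, subset_affineSpan ℝ s hp⟩, interior_maximal (fun (q : affineSpan ℝ s) hq => hUs ⟨hq, q.2⟩)
    (hU.preimage continuous_subtype_val) hpU, rfl⟩

theorem exists_lineMap_mem_of_mem_intrinsicInterior {E : Type*} [AddCommGroup E] [Module ℝ E]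
    [TopologicalSpace E] [IsTopologicalAddGroup E] [ContinuousSMul ℝ E] {s : Set E} {p q : E}
    (hp : p ∈ intrinsicInterior ℝ s) (hq : q ∈ s) : ∃ t : ℝ, 1 < t ∧ lineMap q p t ∈ s := by
  obtain ⟨p, hp, rfl⟩ := hp
  let φ : ℝ → affineSpan ℝ s := fun t =>
    ⟨lineMap q (p : E) t, lineMap_mem t (subset_affineSpan ℝ s hq) p.2⟩
  have hφ : Tendsto φ (𝓝 1) (𝓝 p) :=
    (lineMap_continuous.subtype_mk _).tendsto' 1 p (Subtype.ext (lineMap_apply_one _ _))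
  have hφs : ∀ᶠ t in 𝓝[>] 1, φ t ∈ Subtype.val ⁻¹' s :=
    nhdsWithin_le_nhds (hφ.eventually (mem_interior_iff_mem_nhds.mp hp))
  exact (eventually_mem_nhdsWithin.and hφs).exists

theorem mem_intrinsicInterior_iff_forall_eq_zero {E K F : Type*} [NormedAddCommGroup E]
    [NormedSpace ℝ E] [FiniteDimensional ℝ E] [Fintype K] [AddCommGroup F] [Module ℝ F]
    {s : Set E} {p : E} (f : E →ᵃ[ℝ] F) (r : F) (g : E →ᵃ[ℝ] (K → ℝ))
    (hs : s = {q | f q = r ∧ 0 ≤ g q}) (hp : p ∈ s) :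
    p ∈ intrinsicInterior ℝ s ↔ ∀ k, g p k = 0 → ∀ q ∈ s, g q k = 0 := by
  constructor
  · intro hpi k hpk q hq
    obtain ⟨t, ht, hts⟩ := exists_lineMap_mem_of_mem_intrinsicInterior hpi hq
    have hqk : 0 ≤ g q k := (hs ▸ hq).2 k
    have htk : 0 ≤ g (lineMap q p t) k := (hs ▸ hts).2 k
    rw [apply_lineMap, lineMap_apply_module] at htk
    simp only [Pi.add_apply, Pi.smul_apply, hpk, smul_eq_mul, mul_zero, add_zero] at htk
    nlinarith
  · intro htight
    have hgp : 0 ≤ g p := (hs ▸ hp).2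
    refine mem_intrinsicInterior_of_isOpen (U := g ⁻¹' {k | 0 < g p k}.pi fun _ => Set.Ioi 0) hp
      ((isOpen_set_pi (Set.toFinite _) fun _ _ => isOpen_Ioi).preimage
        g.continuous_of_finiteDimensional) (fun k hk => hk) ?_
    rintro q ⟨hqU, hq⟩
    have hfq : f q = r := eqOn_affineSpan (g := const ℝ E r) (fun x hx => (hs ▸ hx).1) hq
    refine hs ▸ ⟨hfq, fun k => ?_⟩
    rcases (hgp k).lt_or_eq with hpk | hpk
    · exact (hqU k hpk).le
    · exact (eqOn_affineSpan (f := (LinearMap.proj k : (K → ℝ) →ₗ[ℝ] ℝ).toAffineMap.comp g)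
        (g := const ℝ E 0) (fun x hx => htight k hpk.symm x hx) hq).ge

end IntrinsicInterior

theorem forall_pos_add_iff_of_complementary {α β K : Type*} {P : Set α} {D : Set β}
    {g : α → K → ℝ} {h : β → K → ℝ} (hg : ∀ p ∈ P, ∀ k, 0 ≤ g p k) (hh : ∀ q ∈ D, ∀ k, 0 ≤ h q k)
    (hcompl : ∀ p ∈ P, ∀ q ∈ D, ∀ k, g p k * h q k = 0)
    (hstrict : ∀ k, ∃ p ∈ P, ∃ q ∈ D, 0 < g p k + h q k) {p : α} {q : β} (hp : p ∈ P)
    (hq : q ∈ D) :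
    (∀ k, 0 < g p k + h q k) ↔
      (∀ k, g p k = 0 → ∀ p' ∈ P, g p' k = 0) ∧ (∀ k, h q k = 0 → ∀ q' ∈ D, h q' k = 0) := by
  constructor
  · intro hpos
    refine ⟨fun k hpk p' hp' => ?_, fun k hqk q' hq' => ?_⟩
    · have hqk : 0 < h q k := by simpa [hpk] using hpos k
      exact (mul_eq_zero.mp (hcompl p' hp' q hq k)).resolve_right hqk.ne'
    · have hpk : 0 < g p k := by simpa [hqk] using hpos k
      exact (mul_eq_zero.mp (hcompl p hp q' hq' k)).resolve_left hpk.ne'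
  · rintro ⟨hP, hD⟩ k
    by_contra! hk
    have hpk : g p k = 0 := le_antisymm (by linarith [hh q hq k]) (hg p hp k)
    have hqk : h q k = 0 := le_antisymm (by linarith [hg p hp k]) (hh q hq k)
    obtain ⟨p', hp', q', hq', hpos⟩ := hstrict k
    rw [hP k hpk p' hp', hD k hqk q' hq', add_zero] at hpos
    exact hpos.false

section LinearProgramming

variable {ι κ : Type*} (A : Matrix ι κ ℝ) (b : ι → ℝ) (c : κ → ℝ)

def goldmanTuckerMatrix : Matrix ((κ ⊕ ι) ⊕ Unit) ((κ ⊕ ι) ⊕ Unit) ℝ :=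
  fromBlocks (fromBlocks 0 Aᵀ (-A) 0) (replicateCol Unit (Sum.elim (-c) b))
    (replicateRow Unit (Sum.elim c (-b))) 0

theorem goldmanTuckerMatrix_transpose :
    (goldmanTuckerMatrix A b c)ᵀ = -goldmanTuckerMatrix A b c := by
  ext ((j | i) | _) ((j' | i') | _) <;> simp [goldmanTuckerMatrix]

variable [Fintype ι] [Fintype κ]

theorem goldmanTuckerMatrix_mulVec (x : κ → ℝ) (y : ι → ℝ) (t : ℝ) :
    goldmanTuckerMatrix A b c *ᵥ Sum.elim (Sum.elim x y) (fun _ => t) =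
      Sum.elim (Sum.elim (Aᵀ *ᵥ y - t • c) (t • b - A *ᵥ x)) (fun _ => c ⬝ᵥ x - b ⬝ᵥ y) := by
  ext ((j | i) | _) <;>
    simp [goldmanTuckerMatrix, mulVec, dotProduct, Finset.sum_neg_distrib] <;> ring

def primalFace (z : ℝ) : Set ((κ → ℝ) × (ι → ℝ)) :=
  {p | 0 ≤ p.1 ∧ 0 ≤ p.2 ∧ A *ᵥ p.1 + p.2 = b ∧ c ⬝ᵥ p.1 = z}

def dualFace (z : ℝ) : Set ((ι → ℝ) × (κ → ℝ)) :=
  {q | 0 ≤ q.1 ∧ 0 ≤ q.2 ∧ Aᵀ *ᵥ q.1 - q.2 = c ∧ b ⬝ᵥ q.1 = z}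

variable {A b c} {z : ℝ} {p : (κ → ℝ) × (ι → ℝ)} {q : (ι → ℝ) × (κ → ℝ)}

theorem mul_eq_zero_of_mem_primalFace_of_mem_dualFace (hp : p ∈ primalFace A b c z)
    (hq : q ∈ dualFace A b c z) (k : κ ⊕ ι) : Sum.elim p.1 p.2 k * Sum.elim q.2 q.1 k = 0 := by
  obtain ⟨hx, hu, hAxu, hcx⟩ := hp
  obtain ⟨hy, hv, hAyv, hby⟩ := hq
  have hgap : b ⬝ᵥ q.1 - c ⬝ᵥ p.1 = Sum.elim p.1 p.2 ⬝ᵥ Sum.elim q.2 q.1 := by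
    rw [sumElim_dotProduct_sumElim, ← hAxu, ← hAyv, add_dotProduct, sub_dotProduct,
      mulVec_transpose, dotProduct_comm (A *ᵥ _), dotProduct_mulVec, dotProduct_comm q.2,
      dotProduct_comm p.2]
    ring
  rw [hcx, hby, sub_self, eq_comm, dotProduct,
    Finset.sum_eq_zero_iff_of_nonneg fun k _ => mul_nonneg
      (Sum.nonneg_elim_iff.mpr ⟨hx, hu⟩ k) (Sum.nonneg_elim_iff.mpr ⟨hv, hy⟩ k)] at hgap
  exact hgap k (Finset.mem_univ k)

theorem mem_intrinsicInterior_primalFace_iff (hp : p ∈ primalFace A b c z) :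
    p ∈ intrinsicInterior ℝ (primalFace A b c z) ↔
      ∀ k, Sum.elim p.1 p.2 k = 0 → ∀ p' ∈ primalFace A b c z, Sum.elim p'.1 p'.2 k = 0 :=
  mem_intrinsicInterior_iff_forall_eq_zero
    ((A.mulVecLin.coprod LinearMap.id).prod
      (dotProductBilin ℝ ℝ c ∘ₗ LinearMap.fst ℝ _ _)).toAffineMap (b, z)
    (LinearEquiv.sumArrowLequivProdArrow κ ι ℝ ℝ).symm.toLinearMap.toAffineMap
    (by ext ⟨x, u⟩; simp [primalFace, Prod.ext_iff, Pi.le_def, Sum.forall]; tauto) hp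

theorem mem_intrinsicInterior_dualFace_iff (hq : q ∈ dualFace A b c z) :
    q ∈ intrinsicInterior ℝ (dualFace A b c z) ↔
      ∀ k, Sum.elim q.2 q.1 k = 0 → ∀ q' ∈ dualFace A b c z, Sum.elim q'.2 q'.1 k = 0 :=
  mem_intrinsicInterior_iff_forall_eq_zero
    ((Aᵀ.mulVecLin.coprod (-LinearMap.id)).prod
      (dotProductBilin ℝ ℝ b ∘ₗ LinearMap.fst ℝ _ _)).toAffineMap (c, z)
    ((LinearEquiv.sumArrowLequivProdArrow κ ι ℝ ℝ).symm.toLinearMap ∘ₗ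
      (LinearEquiv.prodComm ℝ _ _).toLinearMap).toAffineMap
    (by
      ext ⟨y, v⟩
      simp [dualFace, Prod.ext_iff, Pi.le_def, Sum.forall, sub_eq_add_neg, mulVec_transpose]
      tauto) hq

theorem smul_mem_primalFace_and_smul_mem_dualFace
    (hPopt : ∀ x u, 0 ≤ x → 0 ≤ u → A *ᵥ x + u = b → c ⬝ᵥ x ≤ z)
    (hDopt : ∀ y v, 0 ≤ y → 0 ≤ v → Aᵀ *ᵥ y - v = c → z ≤ b ⬝ᵥ y)
    (hp : p ∈ primalFace A b c z) (hq : q ∈ dualFace A b c z) {x : κ → ℝ} {y : ι → ℝ} {t : ℝ}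
    (hx : 0 ≤ x) (hy : 0 ≤ y) (ht : 0 ≤ t) (hAx : A *ᵥ x ≤ t • b) (hAy : t • c ≤ Aᵀ *ᵥ y)
    (hxy : b ⬝ᵥ y ≤ c ⬝ᵥ x) :
    ((1 + t)⁻¹ • (x + p.1), (1 + t)⁻¹ • (t • b - A *ᵥ x + p.2)) ∈ primalFace A b c z ∧
      ((1 + t)⁻¹ • (y + q.1), (1 + t)⁻¹ • (Aᵀ *ᵥ y - t • c + q.2)) ∈ dualFace A b c z := by
  obtain ⟨hx₀, hu₀, hAxu, hcx⟩ := hp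
  obtain ⟨hy₀, hv₀, hAyv, hby⟩ := hq
  have h1t : 0 < 1 + t := by linarith
  have hs : 0 < (1 + t)⁻¹ := inv_pos.mpr h1t
  have hprimal : A *ᵥ ((1 + t)⁻¹ • (x + p.1)) + (1 + t)⁻¹ • (t • b - A *ᵥ x + p.2) = b := by
    have : A *ᵥ (x + p.1) + (t • b - A *ᵥ x + p.2) = (1 + t) • b :=
      calc _ = t • b + (A *ᵥ p.1 + p.2) := by rw [mulVec_add]; abel
        _ = (1 + t) • b := by rw [hAxu]; module
    rw [mulVec_smul, ← smul_add, this, inv_smul_smul₀ h1t.ne']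
  have hdual : Aᵀ *ᵥ ((1 + t)⁻¹ • (y + q.1)) - (1 + t)⁻¹ • (Aᵀ *ᵥ y - t • c + q.2) = c := by
    have : Aᵀ *ᵥ (y + q.1) - (Aᵀ *ᵥ y - t • c + q.2) = (1 + t) • c :=
      calc _ = t • c + (Aᵀ *ᵥ q.1 - q.2) := by rw [mulVec_add]; abel
        _ = (1 + t) • c := by rw [hAyv]; module
    rw [mulVec_smul, ← smul_sub, this, inv_smul_smul₀ h1t.ne']
  have hxnn : 0 ≤ (1 + t)⁻¹ • (x + p.1) := smul_nonneg hs.le (add_nonneg hx hx₀)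
  have hunn : 0 ≤ (1 + t)⁻¹ • (t • b - A *ᵥ x + p.2) :=
    smul_nonneg hs.le (add_nonneg (sub_nonneg.mpr hAx) hu₀)
  have hynn : 0 ≤ (1 + t)⁻¹ • (y + q.1) := smul_nonneg hs.le (add_nonneg hy hy₀)
  have hvnn : 0 ≤ (1 + t)⁻¹ • (Aᵀ *ᵥ y - t • c + q.2) :=
    smul_nonneg hs.le (add_nonneg (sub_nonneg.mpr hAy) hv₀)
  have hle : b ⬝ᵥ ((1 + t)⁻¹ • (y + q.1)) ≤ c ⬝ᵥ ((1 + t)⁻¹ • (x + p.1)) := by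
    simp only [dotProduct_smul, dotProduct_add, hcx, hby, smul_eq_mul]
    gcongr
  have hcx_le := hPopt _ _ hxnn hunn hprimal
  have hby_ge := hDopt _ _ hynn hvnn hdual
  exact ⟨⟨hxnn, hunn, hprimal, by linarith⟩, ⟨hynn, hvnn, hdual, by linarith⟩⟩

theorem exists_strictly_complementary
    (hPopt : ∀ x u, 0 ≤ x → 0 ≤ u → A *ᵥ x + u = b → c ⬝ᵥ x ≤ z)
    (hDopt : ∀ y v, 0 ≤ y → 0 ≤ v → Aᵀ *ᵥ y - v = c → z ≤ b ⬝ᵥ y)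
    (hp : p ∈ primalFace A b c z) (hq : q ∈ dualFace A b c z) (k : κ ⊕ ι) :
    ∃ p' ∈ primalFace A b c z, ∃ q' ∈ dualFace A b c z,
      0 < Sum.elim p'.1 p'.2 k + Sum.elim q'.2 q'.1 k := by
  classical
  obtain ⟨w, hw, hMw, hwk⟩ :=
    (goldmanTuckerMatrix A b c).exists_nonneg_mulVec_nonneg_of_transpose_eq_neg
      (goldmanTuckerMatrix_transpose A b c) (Sum.inl k)
  obtain ⟨x, y, t, rfl⟩ : ∃ x y t, w = Sum.elim (Sum.elim x y) fun _ => t :=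
    ⟨w ∘ Sum.inl ∘ Sum.inl, w ∘ Sum.inl ∘ Sum.inr, w (Sum.inr ()), by ext ((j | i) | _) <;> rfl⟩
  rw [goldmanTuckerMatrix_mulVec] at hMw hwk
  simp only [Sum.nonneg_elim_iff, sub_nonneg] at hw hMw
  obtain ⟨⟨hx, hy⟩, ht⟩ := hw
  obtain ⟨⟨hAy, hAx⟩, hxy⟩ := hMw
  replace ht : 0 ≤ t := ht ()
  replace hxy : b ⬝ᵥ y ≤ c ⬝ᵥ x := sub_nonneg.mp (hxy ())
  obtain ⟨hp', hq'⟩ := smul_mem_primalFace_and_smul_mem_dualFace hPopt hDopt hp hq hx hy ht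
    hAx hAy hxy
  refine ⟨_, hp', _, hq', ?_⟩
  have hs : 0 < (1 + t)⁻¹ := inv_pos.mpr (by linarith)
  rcases k with j | i
  · have : 0 ≤ p.1 j := hp.1 j
    have : 0 ≤ q.2 j := hq.2.1 j
    simp only [Sum.elim_inl, Pi.smul_apply, Pi.add_apply, Pi.sub_apply, smul_eq_mul] at hwk ⊢
    rw [← mul_add]
    exact mul_pos hs (by linarith)
  · have : 0 ≤ p.2 i := hp.2.1 i
    have : 0 ≤ q.1 i := hq.1 i
    simp only [Sum.elim_inl, Sum.elim_inr, Pi.smul_apply, Pi.add_apply, Pi.sub_apply,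
      smul_eq_mul] at hwk ⊢
    rw [← mul_add]
    exact mul_pos hs (by linarith)

end LinearProgramming

/-- Strict complementarity characterizes relative interiors of the optimal faces: a pair of
primal and dual optimal solutions `((x*,u*),(y*,v*))` satisfies `x* + v* > 0` and
`y* + u* > 0` componentwise iff `(x*,u*)` lies in the relative interior of the primal
optimal face and `(y*,v*)` lies in the relative interior of the dual optimal face. -/
theorem strict_complementarity_iff_relative_interior (m n : ℕ)
    (A : Matrix (Fin m) (Fin n) ℝ) (b : Fin m → ℝ) (c : Fin n → ℝ) (zstar : ℝ)
    (FP : Set ((Fin n → ℝ) × (Fin m → ℝ)))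
    (hFP : FP = {p | (∀ j, 0 ≤ p.1 j) ∧ (∀ i, 0 ≤ p.2 i) ∧
      A.mulVec p.1 + p.2 = b ∧ c ⬝ᵥ p.1 = zstar})
    (FD : Set ((Fin m → ℝ) × (Fin n → ℝ)))
    (hFD : FD = {q | (∀ i, 0 ≤ q.1 i) ∧ (∀ j, 0 ≤ q.2 j) ∧
      Aᵀ.mulVec q.1 - q.2 = c ∧ b ⬝ᵥ q.1 = zstar})
    -- `zstar` is the common optimal value of the primal and dual problems:
    (hPopt : ∀ x : Fin n → ℝ, ∀ u : Fin m → ℝ,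
      (∀ j, 0 ≤ x j) → (∀ i, 0 ≤ u i) → A.mulVec x + u = b → c ⬝ᵥ x ≤ zstar)
    (hDopt : ∀ y : Fin m → ℝ, ∀ v : Fin n → ℝ,
      (∀ i, 0 ≤ y i) → (∀ j, 0 ≤ v j) → Aᵀ.mulVec y - v = c → zstar ≤ b ⬝ᵥ y)
    (xs : Fin n → ℝ) (us : Fin m → ℝ) (ys : Fin m → ℝ) (vs : Fin n → ℝ)
    (hxus : (xs, us) ∈ FP) (hyvs : (ys, vs) ∈ FD) :
    ((∀ j, 0 < xs j + vs j) ∧ (∀ i, 0 < ys i + us i)) ↔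
      ((xs, us) ∈ intrinsicInterior ℝ FP ∧ (ys, vs) ∈ intrinsicInterior ℝ FD) := by
  obtain rfl : FP = primalFace A b c zstar := hFP
  obtain rfl : FD = dualFace A b c zstar := hFD
  rw [mem_intrinsicInterior_primalFace_iff hxus, mem_intrinsicInterior_dualFace_iff hyvs,
    ← forall_pos_add_iff_of_complementary
      (fun p hp => Sum.nonneg_elim_iff.mpr ⟨hp.1, hp.2.1⟩)
      (fun q hq => Sum.nonneg_elim_iff.mpr ⟨hq.2.1, hq.1⟩)
      (fun p hp q hq => mul_eq_zero_of_mem_primalFace_of_mem_dualFace hp hq)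
      (exists_strictly_complementary hPopt hDopt hxus hyvs) hxus hyvs, Sum.forall]
  simp only [Sum.elim_inl, Sum.elim_inr, add_comm (us _)]
end
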